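/- arXiv:1205.6422 — 3 statements merged into one kernel-verified Lean document; each statement's English description precedes it below -/
import Mathlib

section
/- For every Tychonoff space X, the interior of υX in βX equals the union of the sets Ex_X C = βX \ cl_{βX}(X \ C), taken over all cozero-sets C of X whose closure in X is pseudocompact. -/
/-!
For `A ⊆ X`, `cl_{βX} A ⊆ υX` exactly when every continuous real function on `X` is bounded on
`A`: a zero of `f : C(βX, ℝ)` in `cl_{βX} A` missing `X` makes `1 / |f|` unbounded on `A`, and
conversely the extension of `1 / (1 + |h|)` vanishes at a cluster point of `A` outside `υX`.
For an open `C` this boundedness is pseudocompactness of `cl_X C`: an unbounded function on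
`cl_X C` yields a locally finite sequence of open subsets of `C`, and a sum of bump functions on
them is unbounded on `C`. Urysohn's lemma in `βX` then gives, for `p` interior to `υX`, a
cozero-set `C` with `p ∈ Ex C` and `cl_{βX} C ⊆ υX`; conversely `Ex C` is open and lies in
`cl_{βX} C`.
-/

open Set Topology

/-- A zero-set: the preimage of `{0}` under a continuous real-valued function. -/
def IsZeroSet {Y : Type*} [TopologicalSpace Y] (Z : Set Y) : Prop :=
  ∃ f : C(Y, ℝ), Z = f ⁻¹' {0}

/-- A cozero-set: the complement of a zero-set. -/
def IsCozeroSet {Y : Type*} [TopologicalSpace Y] (C : Set Y) : Prop :=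
  IsZeroSet Cᶜ

/-- A space is pseudocompact if every continuous real-valued function on it is bounded. -/
def IsPseudocompact (Y : Type*) [TopologicalSpace Y] : Prop :=
  ∀ f : C(Y, ℝ), ∃ M : ℝ, ∀ y, |f y| ≤ M

/-- A subset is pseudocompact if it is pseudocompact as a subspace. -/
def IsPseudocompactSet {Y : Type*} [TopologicalSpace Y] (A : Set Y) : Prop :=
  ∀ f : C(A, ℝ), ∃ M : ℝ, ∀ a, |f a| ≤ M

/-- The Hewitt realcompactification `υX`, realized as the subspace of `βX` consisting of
those `p ∈ βX` such that every zero-set of `βX` containing `p` meets `X`. -/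
def upsilonSet (X : Type*) [TopologicalSpace X] : Set (StoneCech X) :=
  {p | ∀ Z : Set (StoneCech X), IsZeroSet Z → p ∈ Z →
    (Z ∩ Set.range (stoneCechUnit : X → StoneCech X)).Nonempty}

/-- `ζX = X ∪ cl_{βX}(βX \ υX)`, as a subset of `βX`. -/
def zetaSet (X : Type*) [TopologicalSpace X] : Set (StoneCech X) :=
  Set.range (stoneCechUnit : X → StoneCech X) ∪ closure (upsilonSet X)ᶜ

open Filter

theorem LocallyFinite.image_val_of_isClosed {X ι : Type*} [TopologicalSpace X] {S : Set X}
    (hS : IsClosed S) {t : ι → Set S} (ht : LocallyFinite t) :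
    LocallyFinite fun i => ((↑) '' t i : Set X) := by
  intro x
  by_cases hx : x ∈ S
  · obtain ⟨N, hN, hfin⟩ := ht ⟨x, hx⟩
    obtain ⟨N', hN', hN'N⟩ := (mem_nhds_subtype S _ N).1 hN
    refine ⟨N', hN', hfin.subset ?_⟩
    rintro i ⟨_, ⟨y, hy, rfl⟩, hyN'⟩
    exact ⟨y, hy, hN'N hyN'⟩
  · refine ⟨Sᶜ, hS.isOpen_compl.mem_nhds hx, finite_empty.subset ?_⟩
    rintro i ⟨_, ⟨y, -, rfl⟩, hyS⟩
    exact hyS y.2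

theorem locallyFinite_setOf_natCast_lt {Y : Type*} [TopologicalSpace Y] {f : Y → ℝ}
    (hf : Continuous f) : LocallyFinite fun n : ℕ => {y | (n : ℝ) < f y} := by
  intro y
  refine ⟨{z | f z < f y + 1}, (isOpen_lt hf continuous_const).mem_nhds (lt_add_one (f y)),
    (finite_Iio ⌈f y + 1⌉₊).subset ?_⟩
  rintro n ⟨z, hnz, hzy⟩
  exact Nat.lt_ceil.2 (hnz.trans hzy)

theorem DenseRange.compl_closure_image_compl_subset {α Y : Type*} [TopologicalSpace Y]
    {f : α → Y} (hf : DenseRange f) (s : Set α) :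
    (closure (f '' sᶜ))ᶜ ⊆ closure (f '' s) := by
  intro q hq
  have hq' : q ∈ closure (f '' s ∪ f '' sᶜ) := by
    rw [← image_union, union_compl_self, image_univ]
    exact hf q
  rw [closure_union] at hq'
  exact hq'.resolve_right hq

section

variable {X : Type*} [TopologicalSpace X]

/-- Called a *bounded* subset of `X` by Gillman and Jerison. -/
def IsRelativelyPseudocompact (A : Set X) : Prop :=
  ∀ f : C(X, ℝ), ∃ M : ℝ, ∀ x ∈ A, |f x| ≤ M

theorem IsRelativelyPseudocompact.mono {A B : Set X} (hB : IsRelativelyPseudocompact B)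
    (hAB : A ⊆ B) : IsRelativelyPseudocompact A := fun f =>
  let ⟨M, hM⟩ := hB f
  ⟨M, fun x hx => hM x (hAB hx)⟩

theorem IsPseudocompactSet.isRelativelyPseudocompact {A : Set X} (hA : IsPseudocompactSet A) :
    IsRelativelyPseudocompact A := fun f =>
  let ⟨M, hM⟩ := hA (f.restrict A)
  ⟨M, fun x hx => hM ⟨x, hx⟩⟩

theorem isCozeroSet_setOf_lt (f : C(X, ℝ)) (a : ℝ) : IsCozeroSet {x | a < f x} :=
  ⟨⟨fun x => max (f x - a) 0, by fun_prop⟩, by ext x; simp⟩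

theorem mem_upsilonSet_iff {p : StoneCech X} :
    p ∈ upsilonSet X ↔ ∀ f : C(StoneCech X, ℝ), f p = 0 → ∃ x, f (stoneCechUnit x) = 0 := by
  constructor
  · intro hp f hfp
    obtain ⟨_, hx, x, rfl⟩ := hp _ ⟨f, rfl⟩ hfp
    exact ⟨x, hx⟩
  · rintro hp Z ⟨f, rfl⟩ hfp
    obtain ⟨x, hx⟩ := hp f hfp
    exact ⟨_, hx, x, rfl⟩

/-- A zero of `f` in `cl_{βX} A` that is not approached inside `X` would make `1 / |f|`
unbounded on `A`. -/
theorem closure_image_subset_upsilonSet_of_isRelativelyPseudocompact {A : Set X}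
    (hA : IsRelativelyPseudocompact A) : closure (stoneCechUnit '' A) ⊆ upsilonSet X := by
  intro q hq
  refine mem_upsilonSet_iff.2 fun f hfq => ?_
  by_contra! hf
  obtain ⟨M, hM⟩ := hA ⟨fun x => |f (stoneCechUnit x)|⁻¹,
    (f.continuous.comp continuous_stoneCechUnit).abs.inv₀ fun x => abs_ne_zero.2 (hf x)⟩
  have hbound : ∀ x ∈ A, (max M 1)⁻¹ ≤ |f (stoneCechUnit x)| := fun x hx =>
    inv_le_of_inv_le₀ (abs_pos.2 (hf x))
      ((le_abs_self _).trans ((hM x hx).trans (le_max_left M 1)))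
  have hq_bound : (max M 1)⁻¹ ≤ |f q| :=
    closure_minimal (t := {r | (max M 1)⁻¹ ≤ |f r|})
      (by rintro _ ⟨x, hx, rfl⟩; exact hbound x hx) (isClosed_le continuous_const (by fun_prop)) hq
  rw [hfq, abs_zero] at hq_bound
  exact hq_bound.not_gt (inv_pos.2 (zero_lt_one.trans_le (le_max_right M 1)))

/-- If `h` is unbounded along points `x n ∈ A`, the extension of `1 / (1 + |h|)` to `βX`
vanishes at a cluster point of `x n`, but nowhere on `X`. -/
theorem isRelativelyPseudocompact_of_closure_image_subset_upsilonSet {A : Set X}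
    (hA : closure (stoneCechUnit '' A) ⊆ upsilonSet X) : IsRelativelyPseudocompact A := by
  intro h
  by_contra! hunb
  choose x hxA hx using fun n : ℕ => hunb n
  have hpos : ∀ y, 0 < 1 + |h y| := fun y => by positivity
  let k : X → unitInterval := fun y =>
    ⟨(1 + |h y|)⁻¹, (inv_pos.2 (hpos y)).le,
      inv_le_one_of_one_le₀ (le_add_of_nonneg_right (abs_nonneg _))⟩
  have hk : Continuous k :=
    ((continuous_const.add h.continuous.abs).inv₀ fun y => (hpos y).ne').subtype_mk _
  let f : C(StoneCech X, ℝ) :=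
    ⟨fun q => (stoneCechExtend hk q).1, continuous_subtype_val.comp (continuous_stoneCechExtend hk)⟩
  have hf : ∀ y, f (stoneCechUnit y) = (1 + |h y|)⁻¹ := fun y => by
    simp [f, k, stoneCechExtend_stoneCechUnit]
  have htends : Tendsto (fun n => f (stoneCechUnit (x n))) atTop (𝓝 0) := by
    simp only [hf]
    exact (tendsto_atTop_add_const_left _ 1 (tendsto_atTop_mono (fun n => (hx n).le)
      tendsto_natCast_atTop_atTop)).inv_tendsto_atTop
  obtain ⟨p, hp⟩ := exists_clusterPt_of_compactSpace (map (fun n => stoneCechUnit (x n)) atTop)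
  have hpA : p ∈ closure (stoneCechUnit '' A) :=
    mem_closure_iff_clusterPt.2 (hp.mono (le_principal_iff.2 (mem_map.2
      (univ_mem' fun n => mem_image_of_mem _ (hxA n)))))
  have hfp : f p = 0 :=
    eq_of_nhds_neBot (hp.map f.continuous.continuousAt (tendsto_map'_iff.2 htends))
  obtain ⟨y, hy⟩ := mem_upsilonSet_iff.1 (hA hpA) f hfp
  rw [hf] at hy
  exact (inv_pos.2 (hpos y)).ne' hy

theorem closure_image_subset_upsilonSet_iff {A : Set X} :
    closure (stoneCechUnit '' A) ⊆ upsilonSet X ↔ IsRelativelyPseudocompact A :=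
  ⟨isRelativelyPseudocompact_of_closure_image_subset_upsilonSet,
    closure_image_subset_upsilonSet_of_isRelativelyPseudocompact⟩

/-- The sets where an unbounded `g : C(cl C, ℝ)` exceeds `n`, cut down to `C`. -/
theorem exists_locallyFinite_of_not_isPseudocompactSet_closure {C : Set X} (hC : IsOpen C)
    (hpc : ¬IsPseudocompactSet (closure C)) :
    ∃ V : ℕ → Set X, LocallyFinite V ∧ ∀ n, IsOpen (V n) ∧ (V n).Nonempty ∧ V n ⊆ C := by
  simp only [IsPseudocompactSet, not_forall, not_exists, not_le] at hpc
  obtain ⟨g, hg⟩ := hpc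
  choose W hWo hW using fun n : ℕ =>
    isOpen_induced_iff.1 (isOpen_lt continuous_const g.continuous.abs :
      IsOpen {a : closure C | (n : ℝ) < |g a|})
  refine ⟨fun n => W n ∩ C, ?_, fun n => ⟨(hWo n).inter hC, ?_, inter_subset_right⟩⟩
  · refine ((locallyFinite_setOf_natCast_lt g.continuous.abs).image_val_of_isClosed
      isClosed_closure).subset ?_
    rintro n y ⟨hyW, hyC⟩
    exact ⟨⟨y, subset_closure hyC⟩, by rw [← hW n]; exact hyW, rfl⟩
  · obtain ⟨a, ha⟩ := hg n
    exact mem_closure_iff.1 a.2 _ (hWo n) (by rw [← mem_preimage, hW n]; exact ha)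

theorem exists_continuous_le_apply_of_locallyFinite [CompletelyRegularSpace X] {ι : Type*}
    {V : ι → Set X} (hV : LocallyFinite V) (hVo : ∀ i, IsOpen (V i)) {u : ι → X}
    (hu : ∀ i, u i ∈ V i) (c : ι → ℝ) : ∃ h : C(X, ℝ), ∀ i, c i ≤ h (u i) := by
  choose φ hφ hφu hφV using fun i =>
    CompletelyRegularSpace.completely_regular (u i) (V i)ᶜ (hVo i).isClosed_compl
      (not_not.2 (hu i))
  let t : ι → X → ℝ := fun i x => |c i| * (1 - φ i x)
  have ht_nonneg : ∀ i x, 0 ≤ t i x := fun i x =>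
    mul_nonneg (abs_nonneg _) (sub_nonneg.2 (φ i x).2.2)
  have ht_supp : ∀ i, Function.support (t i) ⊆ V i := fun i x hx =>
    by_contra fun hxV => hx (by simp [t, hφV i hxV])
  have hlf := hV.subset ht_supp
  refine ⟨⟨fun x => ∑ᶠ i, t i x, continuous_finsum (fun i => by fun_prop) hlf⟩, fun i => ?_⟩
  calc c i ≤ t i (u i) := by simp [t, hφu i, le_abs_self]
    _ ≤ ∑ᶠ j, t j (u i) := single_le_finsum i (hlf.point_finite (u i)) (ht_nonneg · (u i))

theorem IsRelativelyPseudocompact.isPseudocompactSet_closure [CompletelyRegularSpace X]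
    {C : Set X} (hC : IsOpen C) (hrel : IsRelativelyPseudocompact C) :
    IsPseudocompactSet (closure C) := by
  by_contra hpc
  obtain ⟨V, hV, hV'⟩ := exists_locallyFinite_of_not_isPseudocompactSet_closure hC hpc
  choose u hu using fun n => (hV' n).2.1
  obtain ⟨h, hh⟩ :=
    exists_continuous_le_apply_of_locallyFinite hV (fun n => (hV' n).1) hu (fun n => n)
  obtain ⟨M, hM⟩ := hrel h
  obtain ⟨n, hn⟩ := exists_nat_gt M
  exact hn.not_ge ((hh n).trans ((le_abs_self _).trans (hM _ ((hV' n).2.2 (hu n)))))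

theorem exists_isCozeroSet_closure_image_subset {U : Set (StoneCech X)} (hU : IsOpen U)
    {p : StoneCech X} (hp : p ∈ U) :
    ∃ C : Set X, IsOpen C ∧ IsCozeroSet C ∧ closure (stoneCechUnit '' C) ⊆ U ∧
      p ∉ closure (stoneCechUnit '' Cᶜ) := by
  obtain ⟨f, hf0, hf1, -⟩ := exists_continuous_zero_one_of_isClosed hU.isClosed_compl
    isClosed_singleton (disjoint_singleton_right.2 (not_not.2 hp))
  let g : C(X, ℝ) := f.comp ⟨stoneCechUnit, continuous_stoneCechUnit⟩
  refine ⟨{x | 1 / 2 < g x}, isOpen_lt continuous_const g.continuous, isCozeroSet_setOf_lt g _,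
    ?_, ?_⟩
  · calc closure (stoneCechUnit '' {x | 1 / 2 < g x})
        ⊆ closure {q | 1 / 2 < f q} := closure_mono (image_preimage_subset _ {q | 1 / 2 < f q})
      _ ⊆ {q | 1 / 2 ≤ f q} := closure_lt_subset_le continuous_const f.continuous
      _ ⊆ U := fun q hq => by_contra fun hqU => by norm_num [hf0 hqU] at hq
  · have hsub : closure (stoneCechUnit '' {x | 1 / 2 < g x}ᶜ) ⊆ {q | f q ≤ 1 / 2} :=
      closure_minimal (by rintro _ ⟨x, hx, rfl⟩; exact (not_lt.1 hx : g x ≤ 1 / 2))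
        (isClosed_le f.continuous continuous_const)
    intro hpC
    have := hsub hpC
    norm_num [hf1 rfl] at this

end

theorem interior_upsilon_eq_iUnion_general (X : Type*) [TopologicalSpace X]
    [CompletelyRegularSpace X] :
    interior (upsilonSet X) =
      ⋃ C ∈ {C : Set X | IsCozeroSet C ∧ IsPseudocompactSet (closure C)},
        (closure ((stoneCechUnit : X → StoneCech X) '' Cᶜ))ᶜ := by
  apply subset_antisymm
  · intro p hp
    obtain ⟨C, hCo, hCz, hCU, hpC⟩ := exists_isCozeroSet_closure_image_subset isOpen_interior hp
    have hrel := closure_image_subset_upsilonSet_iff.1 (hCU.trans interior_subset)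
    exact mem_iUnion₂.2 ⟨C, ⟨hCz, hrel.isPseudocompactSet_closure hCo⟩, hpC⟩
  · refine iUnion₂_subset fun C hC => interior_maximal ?_ isClosed_closure.isOpen_compl
    have hrel := hC.2.isRelativelyPseudocompact.mono subset_closure
    exact (denseRange_stoneCechUnit.compl_closure_image_compl_subset C).trans
      (closure_image_subset_upsilonSet_iff.2 hrel)

/-- The interior of `υX` in `βX` is the union of the sets
`Ex_X C = βX \ cl_{βX}(X \ C)` over all cozero-sets `C` of `X` with pseudocompact closure. -/
theorem interior_upsilon_eq_iUnion (X : Type*) [TopologicalSpace X] [T2Space X]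
    [CompletelyRegularSpace X] :
    interior (upsilonSet X) =
      ⋃ C ∈ {C : Set X | IsCozeroSet C ∧ IsPseudocompactSet (closure C)},
        (closure ((stoneCechUnit : X → StoneCech X) '' Cᶜ))ᶜ :=
  interior_upsilon_eq_iUnion_general X
end

section
/- Let X be a Tychonoff space. Then ζX = X if and only if X is pseudocompact. -/
open Set Topology

/-!
Every point of `X` lies in `υX`, so `ζX = X` exactly when `βX \ υX` is empty, i.e. when every
zero-set of `βX` missing `X` is empty. If `X` is pseudocompact and `F` is a continuous function on
`βX` without zeros on `X`, then `1 / F` is bounded on `X`, so `|F|` is bounded below on `X`, hence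
on all of `βX` by density, and `F` has no zeros at all. Conversely, if `f` is a continuous function
on `X`, the extension `G` of `1 / (1 + |f|)` to `βX` has no zeros on `X`, hence none at all, and
then `1 / G` is bounded on the compact space `βX`, which bounds `f`.
-/

section

variable {X : Type*} [TopologicalSpace X]

theorem ContinuousMap.exists_stoneCech_extension_of_mem_Icc {a b : ℝ} (g : C(X, ℝ))
    (hg : ∀ x, g x ∈ Icc a b) :
    ∃ G : C(StoneCech X, ℝ), ∀ x, G (stoneCechUnit x) = g x := by
  let φ : X → Icc a b := fun x => ⟨g x, hg x⟩
  have hφ : Continuous φ := g.continuous.subtype_mk hg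
  refine ⟨⟨fun q => (stoneCechExtend hφ q).1, continuous_subtype_val.comp
    (continuous_stoneCechExtend hφ)⟩, fun x => ?_⟩
  exact congrArg Subtype.val (congrFun (stoneCechExtend_extends hφ) x)

theorem range_stoneCechUnit_subset_upsilonSet :
    range (stoneCechUnit : X → StoneCech X) ⊆ upsilonSet X := by
  rintro _ ⟨x, rfl⟩ Z - hxZ
  exact ⟨stoneCechUnit x, hxZ, x, rfl⟩

theorem zetaSet_eq_range_iff_upsilonSet_eq_univ :
    zetaSet X = range (stoneCechUnit : X → StoneCech X) ↔ upsilonSet X = univ := by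
  refine ⟨fun h => eq_univ_of_forall fun p => by_contra fun hp => hp ?_, fun h => ?_⟩
  · have hpζ : p ∈ zetaSet X := Or.inr (subset_closure hp)
    exact range_stoneCechUnit_subset_upsilonSet (h ▸ hpζ)
  · rw [zetaSet, h, compl_univ, closure_empty, union_empty]

theorem apply_ne_zero_of_upsilonSet_eq_univ (hυ : upsilonSet X = univ) (F : C(StoneCech X, ℝ))
    (hF : ∀ x, F (stoneCechUnit x) ≠ 0) (q : StoneCech X) : F q ≠ 0 := by
  intro hq
  obtain ⟨_, hzero, x, rfl⟩ := (hυ ▸ mem_univ q : q ∈ upsilonSet X) (F ⁻¹' {0}) ⟨F, rfl⟩ hq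
  exact hF x hzero

theorem upsilonSet_eq_univ_of_isPseudocompact (hX : IsPseudocompact X) :
    upsilonSet X = univ := by
  refine eq_univ_of_forall fun p => ?_
  rintro _ ⟨F, rfl⟩ hp
  by_contra hdisj
  have hF : ∀ x, F (stoneCechUnit x) ≠ 0 := fun x hx => hdisj ⟨_, hx, x, rfl⟩
  obtain ⟨M, hM⟩ := hX ⟨fun x => (F (stoneCechUnit x))⁻¹,
    (F.continuous.comp continuous_stoneCechUnit).inv₀ hF⟩
  have hbelow : ∀ x, 1 ≤ M * |F (stoneCechUnit x)| := fun x => by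
    have hx := hM x
    simp only [ContinuousMap.coe_mk, abs_inv] at hx
    exact (inv_le_iff_one_le_mul₀ (abs_pos.2 (hF x))).1 hx
  have hp' : 1 ≤ M * |F p| := denseRange_stoneCechUnit.induction_on p
    (isClosed_le continuous_const (continuous_const.mul F.continuous.abs)) hbelow
  norm_num [show F p = 0 from hp] at hp'

theorem isPseudocompact_of_upsilonSet_eq_univ (hυ : upsilonSet X = univ) :
    IsPseudocompact X := by
  intro f
  have hden_pos : ∀ x, 0 < 1 + |f x| := fun x => by positivity
  let g : C(X, ℝ) := ⟨fun x => (1 + |f x|)⁻¹,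
    (continuous_const.add f.continuous.abs).inv₀ fun x => (hden_pos x).ne'⟩
  have hg_pos : ∀ x, 0 < g x := fun x => inv_pos.2 (hden_pos x)
  obtain ⟨G, hG⟩ := g.exists_stoneCech_extension_of_mem_Icc fun x =>
    ⟨(hg_pos x).le, inv_le_one_of_one_le₀ (le_add_of_nonneg_right (abs_nonneg _))⟩
  have hG_ne : ∀ q, G q ≠ 0 := apply_ne_zero_of_upsilonSet_eq_univ hυ G
    fun x => hG x ▸ (hg_pos x).ne'
  obtain ⟨C, hC⟩ := isCompact_univ.exists_bound_of_continuousOn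
    (G.continuous.inv₀ hG_ne).continuousOn
  refine ⟨C, fun x => ?_⟩
  have hx := hC (stoneCechUnit x) (mem_univ _)
  rw [Pi.inv_apply, hG x, norm_inv, Real.norm_of_nonneg (hg_pos x).le] at hx
  have : (g x)⁻¹ = 1 + |f x| := inv_inv _
  linarith

theorem upsilonSet_eq_univ_iff_isPseudocompact : upsilonSet X = univ ↔ IsPseudocompact X :=
  ⟨isPseudocompact_of_upsilonSet_eq_univ, upsilonSet_eq_univ_of_isPseudocompact⟩

end

theorem zetaSet_eq_self_iff_general (X : Type*) [TopologicalSpace X] :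
    zetaSet X = Set.range (stoneCechUnit : X → StoneCech X) ↔ IsPseudocompact X := by
  rw [zetaSet_eq_range_iff_upsilonSet_eq_univ, upsilonSet_eq_univ_iff_isPseudocompact]

/-- `ζX = X` if and only if `X` is pseudocompact. -/
theorem zetaSet_eq_self_iff (X : Type*) [TopologicalSpace X] [T2Space X]
    [CompletelyRegularSpace X] :
    zetaSet X = Set.range (stoneCechUnit : X → StoneCech X) ↔ IsPseudocompact X :=
  zetaSet_eq_self_iff_general X
end

section
/- Let X be a Tychonoff space. The following are equivalent: (a) ζX = αX, where αX = X ∪ (βX \ υX); (b) υX \ X ⊆ int_{βX} υX; (c) every free z-ultrafilter in X with the countable intersection property has an element contained in a cozero-set of X with pseudocompact closure in X. -/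
open Set Topology

/-- A z-filter on `Y`: a nonempty family of nonempty zero-sets, closed under finite
intersections and under zero-set supersets. -/
def IsZFilter {Y : Type*} [TopologicalSpace Y] (F : Set (Set Y)) : Prop :=
  F.Nonempty ∧ (∀ Z ∈ F, IsZeroSet Z ∧ Z.Nonempty) ∧
    (∀ Z ∈ F, ∀ W ∈ F, Z ∩ W ∈ F) ∧
    (∀ Z ∈ F, ∀ W : Set Y, IsZeroSet W → Z ⊆ W → W ∈ F)

/-- A z-ultrafilter: a maximal z-filter. -/
def IsZUltrafilter {Y : Type*} [TopologicalSpace Y] (F : Set (Set Y)) : Prop :=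
  IsZFilter F ∧ ∀ G : Set (Set Y), IsZFilter G → F ⊆ G → G = F

/-- A family of sets has the countable intersection property if every countable
subfamily has nonempty intersection. -/
def HasCIP {Y : Type*} (F : Set (Set Y)) : Prop :=
  ∀ G ⊆ F, G.Countable → (⋂₀ G).Nonempty

/-!
A point `p ∈ βX` determines the z-ultrafilter `zFilterAt p` of zero-sets of `X` whose closures
in `βX` contain `p`, and every z-ultrafilter arises this way. It is free iff `p ∉ X`, and it has
the countable intersection property iff `p ∈ υX`, because countable intersections of zero-sets
of `βX` are zero-sets. For an open (e.g. cozero) set `C ⊆ X`, `cl_X C` is pseudocompact iff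
`cl_{βX} C ⊆ υX`: a continuous function unbounded on `cl_X C` yields, via bumps on a locally
finite family of open subsets of `C`, one on `X` unbounded on `C`, and a continuous function on
`X` is bounded on any `A` with `cl_{βX} A ⊆ υX`. Now a point `p ∈ υX \ X` lies in `int υX` iff
some cozero-set `C` with `cl_{βX} C ⊆ υX` has `p ∉ cl_{βX} (X \ C)`, which is (b) ↔ (c).
Finally (a) ↔ (b) is set algebra, as `cl_{βX} (βX \ υX) = βX \ int υX`.
-/

section

variable {X : Type*} [TopologicalSpace X]

lemma isZeroSet_univ : IsZeroSet (univ : Set X) :=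
  ⟨0, by ext; simp⟩

lemma IsZeroSet.isClosed {Z : Set X} (hZ : IsZeroSet Z) : IsClosed Z := by
  obtain ⟨f, rfl⟩ := hZ
  exact isClosed_singleton.preimage f.continuous

lemma IsCozeroSet.isOpen {C : Set X} (hC : IsCozeroSet C) : IsOpen C :=
  isClosed_compl_iff.1 hC.isClosed

lemma IsZeroSet.inter {Z W : Set X} (hZ : IsZeroSet Z) (hW : IsZeroSet W) :
    IsZeroSet (Z ∩ W) := by
  obtain ⟨f, rfl⟩ := hZ
  obtain ⟨g, rfl⟩ := hW
  refine ⟨⟨fun x => |f x| + |g x|, by fun_prop⟩, ?_⟩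
  ext x
  simp [add_eq_zero_iff_of_nonneg (abs_nonneg (f x)) (abs_nonneg (g x))]

lemma isZeroSet_setOf_le {h : X → ℝ} (hh : Continuous h) (c : ℝ) : IsZeroSet {x | h x ≤ c} :=
  ⟨⟨fun x => max (h x - c) 0, by fun_prop⟩, by ext; simp⟩

lemma isCozeroSet_setOf_lt_s7 {h : X → ℝ} (hh : Continuous h) (c : ℝ) :
    IsCozeroSet {x | h x < c} := by
  have : {x | h x < c}ᶜ = {x | -h x ≤ -c} := by ext; simp
  rw [IsCozeroSet, this]
  exact isZeroSet_setOf_le hh.neg _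

lemma isZeroSet_iInter {Z : ℕ → Set X} (hZ : ∀ n, IsZeroSet (Z n)) : IsZeroSet (⋂ n, Z n) := by
  choose f hf using hZ
  set g : ℕ → X → ℝ := fun n x => (1 / 2 : ℝ) ^ n * min |f n x| 1
  have hg_nonneg : ∀ n x, 0 ≤ g n x := fun n x => by positivity
  have hg_le : ∀ n x, ‖g n x‖ ≤ (1 / 2 : ℝ) ^ n := fun n x => by
    rw [Real.norm_of_nonneg (hg_nonneg n x)]
    exact mul_le_of_le_one_right (by positivity) (min_le_right _ _)
  refine ⟨⟨fun x => ∑' n, g n x, continuous_tsum (fun n => by fun_prop) summable_geometric_two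
    hg_le⟩, ?_⟩
  ext x
  have hsum := (summable_geometric_two.of_norm_bounded fun n => hg_le n x).hasSum
  simp only [mem_iInter, hf, mem_preimage, mem_singleton_iff, ContinuousMap.coe_mk]
  have hg_zero : ∀ n, g n x = 0 ↔ f n x = 0 := fun n => by
    simp +contextual [g, min_eq_iff, abs_eq_zero]
  constructor
  · intro h
    simp [(hg_zero _).2 (h _)]
  · intro h n
    exact (hg_zero n).1 (funext_iff.1 ((hasSum_zero_iff_of_nonneg (hg_nonneg · x)).1 (h ▸ hsum)) n)

lemma exists_stoneCech_extension_Icc {h : X → ℝ} (hh : Continuous h)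
    (hI : ∀ x, h x ∈ Icc (0 : ℝ) 1) :
    ∃ H : C(StoneCech X, ℝ), (∀ x, H (stoneCechUnit x) = h x) ∧ ∀ p, H p ∈ Icc (0 : ℝ) 1 := by
  let h' : X → Icc (0 : ℝ) 1 := fun x => ⟨h x, hI x⟩
  have hh' : Continuous h' := hh.subtype_mk _
  exact ⟨⟨fun p => ((stoneCechExtend hh' p : Icc (0 : ℝ) 1) : ℝ),
      continuous_subtype_val.comp (continuous_stoneCechExtend hh')⟩,
    fun x => congrArg Subtype.val (congrFun (stoneCechExtend_extends hh') x),
    fun p => (stoneCechExtend hh' p).2⟩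

lemma IsZeroSet.exists_preimage_stoneCechUnit {Z : Set X} (hZ : IsZeroSet Z) :
    ∃ Z' : Set (StoneCech X), IsZeroSet Z' ∧ stoneCechUnit ⁻¹' Z' = Z := by
  obtain ⟨f, rfl⟩ := hZ
  obtain ⟨H, hH, -⟩ := exists_stoneCech_extension_Icc (h := fun x => min |f x| 1) (by fun_prop)
    fun x => ⟨le_min (abs_nonneg _) zero_le_one, min_le_right _ _⟩
  refine ⟨H ⁻¹' {0}, ⟨H, rfl⟩, ?_⟩
  ext x
  simp +contextual [hH, min_eq_iff, abs_eq_zero]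

lemma IsZeroSet.mem_of_stoneCechUnit_mem_closure {Z : Set X} (hZ : IsZeroSet Z) {x : X}
    (hx : stoneCechUnit x ∈ closure (stoneCechUnit '' Z)) : x ∈ Z := by
  obtain ⟨Z', hZ', rfl⟩ := hZ.exists_preimage_stoneCechUnit
  exact closure_minimal (image_preimage_subset _ _) hZ'.isClosed hx

lemma IsZeroSet.disjoint_closure_image_stoneCechUnit {Z W : Set X} (hZ : IsZeroSet Z)
    (hW : IsZeroSet W) (hZW : Disjoint Z W) :
    Disjoint (closure (stoneCechUnit '' Z)) (closure (stoneCechUnit '' W)) := by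
  obtain ⟨f, rfl⟩ := hZ
  obtain ⟨g, rfl⟩ := hW
  have hpos : ∀ x, 0 < |f x| + |g x| := fun x => by
    by_contra! h
    have hf : f x = 0 := abs_eq_zero.1 (by linarith [abs_nonneg (f x), abs_nonneg (g x)])
    have hg : g x = 0 := abs_eq_zero.1 (by linarith [abs_nonneg (f x), abs_nonneg (g x)])
    exact disjoint_left.1 hZW hf hg
  -- `|f| / (|f| + |g|)` separates the two zero-sets, and so does its extension to `βX`
  obtain ⟨H, hH, -⟩ := exists_stoneCech_extension_Icc
    (h := fun x => |f x| / (|f x| + |g x|)) (by fun_prop (disch := exact fun x => (hpos x).ne'))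
    fun x => ⟨by positivity, (div_le_one (hpos x)).2 (le_add_of_nonneg_right (abs_nonneg _))⟩
  have hZ0 : MapsTo H (closure (stoneCechUnit '' (f ⁻¹' {0}))) {0} := by
    refine MapsTo.closure_left ?_ H.continuous isClosed_singleton
    rintro _ ⟨x, hx, rfl⟩
    simp_all
  have hW1 : MapsTo H (closure (stoneCechUnit '' (g ⁻¹' {0}))) {1} := by
    refine MapsTo.closure_left ?_ H.continuous isClosed_singleton
    rintro _ ⟨x, hx, rfl⟩
    have hf : f x ≠ 0 := fun hf => disjoint_left.1 hZW hf hx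
    simp_all
  exact disjoint_left.2 fun p hpZ hpW => zero_ne_one ((hZ0 hpZ).symm.trans (hW1 hpW))

lemma exists_zeroSet_subset_cozeroSet_of_notMem {K : Set (StoneCech X)} (hK : IsClosed K)
    {p : StoneCech X} (hp : p ∉ K) :
    ∃ U : Set (StoneCech X), IsOpen U ∧ p ∈ U ∧ ∃ Z C : Set X, IsZeroSet Z ∧ IsCozeroSet C ∧
      stoneCechUnit ⁻¹' U ⊆ Z ∧ Z ⊆ C ∧ Disjoint (closure (stoneCechUnit '' C)) K := by
  obtain ⟨u, hu0, hu1, -⟩ := exists_continuous_zero_one_of_isClosed isClosed_singleton hK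
    (disjoint_singleton_left.2 hp)
  have hu : Continuous fun x => u (stoneCechUnit x) := u.continuous.comp continuous_stoneCechUnit
  have hCK : Disjoint (closure (stoneCechUnit '' {x | u (stoneCechUnit x) < 2 / 3})) K :=
    ((disjoint_singleton_right.2 (by norm_num : (1 : ℝ) ∉ Iic (2 / 3))).preimage u).mono
      (closure_minimal (fun _ ⟨x, hx, hxq⟩ => hxq ▸ le_of_lt (a := u _) hx)
        (isClosed_Iic.preimage u.continuous))
      fun q hq => hu1 hq
  refine ⟨u ⁻¹' Iio (1 / 3), isOpen_Iio.preimage u.continuous, by simp [hu0 (mem_singleton p)],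
    _, _, isZeroSet_setOf_le hu (1 / 3), isCozeroSet_setOf_lt_s7 hu (2 / 3),
    fun x (hx : u (stoneCechUnit x) < 1 / 3) => hx.le,
    fun x (hx : u (stoneCechUnit x) ≤ 1 / 3) => show u (stoneCechUnit x) < 2 / 3 by linarith, hCK⟩

/-- The z-ultrafilter `A^p` of Gillman–Jerison. -/
def zFilterAt (p : StoneCech X) : Set (Set X) :=
  {Z | IsZeroSet Z ∧ p ∈ closure (stoneCechUnit '' Z)}

variable {p : StoneCech X}

lemma mem_zFilterAt_of_preimage_subset {U : Set (StoneCech X)} (hU : IsOpen U) (hpU : p ∈ U)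
    {Z : Set X} (hZ : IsZeroSet Z) (hUZ : stoneCechUnit ⁻¹' U ⊆ Z) : Z ∈ zFilterAt p :=
  ⟨hZ, closure_mono (image_mono hUZ)
    (denseRange_stoneCechUnit.subset_closure_image_preimage_of_isOpen hU hpU)⟩

lemma exists_mem_zFilterAt_subset_cozeroSet {K : Set (StoneCech X)} (hK : IsClosed K)
    (hp : p ∉ K) : ∃ Z ∈ zFilterAt p, ∃ C : Set X, IsCozeroSet C ∧ Z ⊆ C ∧
      Disjoint (closure (stoneCechUnit '' C)) K := by
  obtain ⟨U, hU, hpU, Z, C, hZ, hC, hUZ, hZC, hCK⟩ :=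
    exists_zeroSet_subset_cozeroSet_of_notMem hK hp
  exact ⟨Z, mem_zFilterAt_of_preimage_subset hU hpU hZ hUZ, C, hC, hZC, hCK⟩

lemma inter_mem_zFilterAt {Z W : Set X} (hZ : Z ∈ zFilterAt p) (hW : W ∈ zFilterAt p) :
    Z ∩ W ∈ zFilterAt p := by
  refine ⟨hZ.1.inter hW.1, ?_⟩
  by_contra hp
  obtain ⟨U, hU, hpU, Z₀, C, hZ₀, -, hUZ₀, hZ₀C, hCK⟩ :=
    exists_zeroSet_subset_cozeroSet_of_notMem isClosed_closure hp
  have shrink : ∀ {Y : Set X}, Y ∈ zFilterAt p → p ∈ closure (stoneCechUnit '' (Y ∩ Z₀)) :=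
    fun {Y} hY => closure_mono (by rintro _ ⟨hu, y, hy, rfl⟩; exact ⟨y, ⟨hy, hUZ₀ hu⟩, rfl⟩)
      (hU.inter_closure ⟨hpU, hY.2⟩)
  have hdisj : Disjoint (Z ∩ Z₀) (W ∩ Z₀) := disjoint_left.2 fun x ⟨hxZ, hx₀⟩ ⟨hxW, _⟩ =>
    disjoint_left.1 hCK (subset_closure ⟨x, hZ₀C hx₀, rfl⟩)
      (subset_closure ⟨x, ⟨hxZ, hxW⟩, rfl⟩)
  exact disjoint_left.1 ((hZ.1.inter hZ₀).disjoint_closure_image_stoneCechUnit (hW.1.inter hZ₀)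
    hdisj) (shrink hZ) (shrink hW)

lemma isZFilter_zFilterAt (p : StoneCech X) : IsZFilter (zFilterAt p) := by
  refine ⟨⟨univ, isZeroSet_univ, ?_⟩, fun Z hZ => ⟨hZ.1, ?_⟩,
    fun Z hZ W hW => inter_mem_zFilterAt hZ hW,
    fun Z hZ W hW hZW => ⟨hW, closure_mono (image_mono hZW) hZ.2⟩⟩
  · rw [image_univ, denseRange_stoneCechUnit.closure_range]
    exact mem_univ p
  · by_contra! h
    simpa [h] using hZ.2

lemma isZUltrafilter_zFilterAt (p : StoneCech X) : IsZUltrafilter (zFilterAt p) := by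
  refine ⟨isZFilter_zFilterAt p, fun G hG hpG => (hpG.antisymm fun W hW => ?_).symm⟩
  refine ⟨(hG.2.1 W hW).1, by_contra fun hp => ?_⟩
  obtain ⟨Z, hZ, C, -, hZC, hCW⟩ := exists_mem_zFilterAt_subset_cozeroSet isClosed_closure hp
  obtain ⟨x, hxZ, hxW⟩ := (hG.2.1 _ (hG.2.2.1 _ (hpG hZ) W hW)).2
  exact disjoint_left.1 hCW (subset_closure ⟨x, hZC hxZ, rfl⟩) (subset_closure ⟨x, hxW, rfl⟩)

lemma IsZUltrafilter.exists_eq_zFilterAt {F : Set (Set X)} (hF : IsZUltrafilter F) :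
    ∃ p : StoneCech X, F = zFilterAt p := by
  obtain ⟨⟨Z₀, hZ₀⟩, hFZ, hF_inter, -⟩ := hF.1
  have : Nonempty F := ⟨⟨Z₀, hZ₀⟩⟩
  obtain ⟨p, hp⟩ := IsCompact.nonempty_iInter_of_directed_nonempty_isCompact_isClosed
    (fun Z : F => closure (stoneCechUnit '' (Z : Set X)))
    (fun Z W => ⟨⟨Z ∩ W, hF_inter _ Z.2 _ W.2⟩, closure_mono (image_mono inter_subset_left),
      closure_mono (image_mono inter_subset_right)⟩)
    (fun Z => ((hFZ Z Z.2).2.image _).closure)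
    (fun _ => isClosed_closure.isCompact) (fun _ => isClosed_closure)
  rw [mem_iInter] at hp
  exact ⟨p, hF.2 _ (isZFilter_zFilterAt p) (fun Z hZ => ⟨(hFZ Z hZ).1, hp ⟨Z, hZ⟩⟩) |>.symm⟩

lemma sInter_zFilterAt_eq_empty_iff : ⋂₀ zFilterAt p = ∅ ↔ p ∉ range stoneCechUnit := by
  constructor
  · rintro h ⟨x, rfl⟩
    exact eq_empty_iff_forall_notMem.1 h x fun Z hZ =>
      hZ.1.mem_of_stoneCechUnit_mem_closure hZ.2
  · refine fun hp => eq_empty_iff_forall_notMem.2 fun x hx => ?_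
    have hpx : p ∉ ({stoneCechUnit x} : Set (StoneCech X)) := fun h => hp ⟨x, h.symm⟩
    obtain ⟨Z, hZ, C, -, hZC, hCx⟩ :=
      exists_mem_zFilterAt_subset_cozeroSet isClosed_singleton hpx
    exact disjoint_left.1 hCx (subset_closure ⟨x, hZC (hx Z hZ), rfl⟩) rfl

lemma hasCIP_zFilterAt_iff : HasCIP (zFilterAt p) ↔ p ∈ upsilonSet X := by
  constructor
  · rintro hcip _ ⟨H, rfl⟩ (hHp : H p = 0)
    have hmem : ∀ n : ℕ, {x | |H (stoneCechUnit x)| ≤ 1 / (n + 1)} ∈ zFilterAt p := fun n =>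
      mem_zFilterAt_of_preimage_subset (U := {q | |H q| < 1 / (n + 1)})
        (isOpen_lt (continuous_abs.comp H.continuous) continuous_const)
        (show |H p| < 1 / (n + 1) by simp [hHp]; positivity)
        (isZeroSet_setOf_le ((continuous_abs.comp H.continuous).comp continuous_stoneCechUnit) _)
        fun x (hx : |H (stoneCechUnit x)| < 1 / (n + 1)) => hx.le
    obtain ⟨x, hx⟩ := hcip (range fun n : ℕ => {x | |H (stoneCechUnit x)| ≤ 1 / (n + 1)})
      (range_subset_iff.2 hmem) (countable_range _)
    refine ⟨stoneCechUnit x, ?_, x, rfl⟩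
    by_contra h0
    obtain ⟨n, hn⟩ := exists_nat_one_div_lt (abs_pos.2 h0)
    exact (hx _ (mem_range_self n)).not_gt hn
  · intro hp G hG hGc
    rcases G.eq_empty_or_nonempty with rfl | hG₀
    · have : Nonempty X := denseRange_stoneCechUnit.nonempty_iff.2 ⟨p⟩
      simp
    obtain ⟨Z, rfl⟩ := hGc.exists_eq_range hG₀
    -- `⋂ₙ cl Zₙ` contains a zero-set of `βX` through `p`, which meets `X` since `p ∈ υX`
    choose Z' hZ' hZ'Z using fun n => (hG (mem_range_self n)).1.exists_preimage_stoneCechUnit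
    have hpZ' : p ∈ ⋂ n, Z' n := mem_iInter.2 fun n =>
      closure_minimal (by rw [← hZ'Z n]; exact image_preimage_subset _ _) (hZ' n).isClosed
        (hG (mem_range_self n)).2
    obtain ⟨_, hx, x, rfl⟩ := hp _ (isZeroSet_iInter hZ') hpZ'
    refine ⟨x, forall_mem_range.2 fun n => ?_⟩
    rw [← hZ'Z n]
    exact mem_iInter.1 hx n

lemma IsPseudocompactSet.closure_image_subset_upsilonSet {K : Set X}
    (hK : IsPseudocompactSet K) : closure (stoneCechUnit '' K) ⊆ upsilonSet X := by
  rintro q hq _ ⟨H, rfl⟩ (hHq : H q = 0)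
  by_contra hX
  have hH : ∀ x, H (stoneCechUnit x) ≠ 0 := fun x hx => hX ⟨_, hx, x, rfl⟩
  obtain ⟨M, hM⟩ := hK ⟨fun a => |H (stoneCechUnit a)|⁻¹, (continuous_abs.comp (H.continuous.comp
    (continuous_stoneCechUnit.comp continuous_subtype_val))).inv₀ fun a => abs_ne_zero.2 (hH a)⟩
  have hbound : ∀ x ∈ K, M⁻¹ ≤ |H (stoneCechUnit x)| := fun x hx =>
    inv_le_of_inv_le₀ (abs_pos.2 (hH x)) ((le_abs_self _).trans (hM ⟨x, hx⟩))
  have hMq : M⁻¹ ≤ |H q| := MapsTo.closure_left (f := fun r => |H r|) (t := Ici M⁻¹)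
    (by rintro _ ⟨x, hx, rfl⟩; exact hbound x hx) H.continuous.abs isClosed_Ici hq
  obtain ⟨_, x, hx, rfl⟩ := closure_nonempty_iff.1 ⟨q, hq⟩
  have hM : 0 < M⁻¹ := inv_pos.2 <|
    (inv_pos.2 (abs_pos.2 (hH x))).trans_le ((le_abs_self _).trans (hM ⟨x, hx⟩))
  rw [hHq, abs_zero] at hMq
  exact hMq.not_gt hM

lemma exists_bound_of_closure_image_subset_upsilonSet {A : Set X}
    (hA : closure (stoneCechUnit '' A) ⊆ upsilonSet X) {g : X → ℝ} (hg : Continuous g) :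
    ∃ M, ∀ x ∈ A, |g x| ≤ M := by
  rcases A.eq_empty_or_nonempty with rfl | ⟨x₀, hx₀⟩
  · exact ⟨0, by simp⟩
  have hpos : ∀ x, 0 < 1 + |g x| := fun x => by positivity
  obtain ⟨S, hS, hSI⟩ := exists_stoneCech_extension_Icc (h := fun x => 1 / (1 + |g x|))
    (by fun_prop (disch := exact fun x => (hpos x).ne'))
    fun x => ⟨by positivity, (div_le_one (hpos x)).2 (le_add_of_nonneg_right (abs_nonneg _))⟩
  -- `S` attains its minimum on the compact set `cl_{βX} A` at a point of `υX`, where it is positive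
  obtain ⟨q, hq, hmin⟩ :=
    (isClosed_closure (s := stoneCechUnit '' A)).isCompact.exists_isMinOn
      ⟨stoneCechUnit x₀, subset_closure ⟨x₀, hx₀, rfl⟩⟩ S.continuous.continuousOn
  have hSq : 0 < S q := by
    refine (hSI q).1.lt_of_ne fun h0 => ?_
    obtain ⟨_, hx, x, rfl⟩ := hA hq _ ⟨S, rfl⟩ h0.symm
    exact (show (0 : ℝ) < S (stoneCechUnit x) by rw [hS]; exact one_div_pos.2 (hpos x)).ne' hx
  refine ⟨1 / S q, fun x hx => ?_⟩
  have := hmin (subset_closure ⟨x, hx, rfl⟩)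
  rw [mem_ofPred_eq, hS, le_div_iff₀ (hpos x)] at this
  rw [le_div_iff₀ hSq]
  nlinarith

lemma IsClosed.locallyFinite_image_val {ι : Type*} {S : Set X} (hS : IsClosed S)
    {u : ι → Set S} (hu : LocallyFinite u) : LocallyFinite fun i => ((↑) : S → X) '' u i := by
  intro x
  by_cases hx : x ∈ S
  · obtain ⟨t, ht, hfin⟩ := hu ⟨x, hx⟩
    obtain ⟨t', ht', ht't⟩ := (mem_nhds_subtype S _ t).1 ht
    refine ⟨t', ht', hfin.subset fun i ⟨_, ⟨y, hy, rfl⟩, hyt'⟩ => ⟨y, hy, ht't hyt'⟩⟩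
  · refine ⟨Sᶜ, hS.isOpen_compl.mem_nhds hx, (finite_empty).subset ?_⟩
    rintro i ⟨_, ⟨y, -, rfl⟩, hy⟩
    exact hy y.2

lemma locallyFinite_ball_of_le_abs {c : ℕ → ℝ} (hc : ∀ n : ℕ, (n : ℝ) ≤ |c n|) :
    LocallyFinite fun n => Metric.ball (c n) 1 := by
  intro y
  refine ⟨Metric.ball y 1, Metric.ball_mem_nhds y one_pos,
    (finite_Iio ⌈|y| + 2⌉₊).subset fun n ⟨z, hzn, hzy⟩ => ?_⟩
  rw [Metric.mem_ball, Real.dist_eq] at hzn hzy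
  have hcy : |c n| < |y| + 2 := calc
    |c n| = |(c n - z) + (z - y) + y| := by ring_nf
    _ ≤ |c n - z| + |z - y| + |y| := abs_add_three _ _ _
    _ < |y| + 2 := by rw [abs_sub_comm] at hzn; linarith
  exact Nat.lt_ceil.2 (by linarith [hc n])

lemma exists_continuous_le_of_locallyFinite [CompletelyRegularSpace X] {U : ℕ → Set X}
    (hU : ∀ n, IsOpen (U n)) (hlf : LocallyFinite U) {a : ℕ → X} (ha : ∀ n, a n ∈ U n) :
    ∃ G : X → ℝ, Continuous G ∧ ∀ n : ℕ, (n : ℝ) ≤ G (a n) := by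
  choose φ hφ hφa hφU using fun n =>
    CompletelyRegularSpace.completely_regular (a n) (U n)ᶜ (hU n).isClosed_compl
      (notMem_compl_iff.2 (ha n))
  set g : ℕ → X → ℝ := fun n x => n * (1 - φ n x)
  have hg_nonneg : ∀ n x, 0 ≤ g n x := fun n x => mul_nonneg n.cast_nonneg (by
    linarith [(φ n x).2.2])
  have hsupp : ∀ n, Function.support (g n) ⊆ U n := fun n x hx => by
    by_contra hxU
    exact hx (by simp [g, hφU n hxU])
  refine ⟨fun x => ∑ᶠ n, g n x,
    continuous_finsum (fun n => by fun_prop) (hlf.subset hsupp), fun n => ?_⟩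
  have : g n (a n) = n := by simp [g, hφa n]
  rw [← this]
  exact single_le_finsum n ((hlf.point_finite (a n)).subset fun m hm => hsupp m hm)
    fun m => hg_nonneg m (a n)

lemma exists_le_abs_comp_inclusion_closure {C : Set X} {f : C(closure C, ℝ)}
    (hf : ¬∃ M, ∀ b, |f b| ≤ M) (r : ℝ) : ∃ x : C, r ≤ |f (inclusion subset_closure x)| := by
  by_contra! h
  exact hf ⟨r, fun b => ((denseRange_inclusion_iff subset_closure).2 subset_rfl).induction_on b
    (isClosed_le (continuous_abs.comp f.continuous) continuous_const) fun x => (h x).le⟩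

lemma IsOpen.isPseudocompactSet_closure_iff [CompletelyRegularSpace X] {C : Set X}
    (hC : IsOpen C) :
    IsPseudocompactSet (closure C) ↔ closure (stoneCechUnit '' C) ⊆ upsilonSet X := by
  refine ⟨fun h => (closure_mono (image_mono subset_closure)).trans
    h.closure_image_subset_upsilonSet, fun hcl f => by_contra fun hf => ?_⟩
  choose a ha using fun n : ℕ => exists_le_abs_comp_inclusion_closure hf n
  set j := inclusion (subset_closure : C ⊆ closure C)
  -- bumps on the locally finite family `V n` glue to a function on `X` unbounded on `C`
  set V : ℕ → Set C := fun n => (f ∘ j) ⁻¹' Metric.ball (f (j (a n))) 1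
  have hV : LocallyFinite fun n => ((↑) : C → X) '' V n :=
    (isClosed_closure.locallyFinite_image_val
      ((locallyFinite_ball_of_le_abs ha).preimage_continuous f.continuous)).subset
      fun n => by rintro _ ⟨x, hx, rfl⟩; exact ⟨j x, hx, rfl⟩
  obtain ⟨G, hG, hGa⟩ := exists_continuous_le_of_locallyFinite
    (fun n => hC.isOpenMap_subtype_val _
      (Metric.isOpen_ball.preimage (f.continuous.comp (continuous_inclusion _)))) hV
    (a := fun n => a n) fun n => ⟨a n, Metric.mem_ball_self one_pos, rfl⟩
  obtain ⟨M, hM⟩ := exists_bound_of_closure_image_subset_upsilonSet hcl hG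
  obtain ⟨n, hn⟩ := exists_nat_gt M
  linarith [hGa n, le_abs_self (G (a n)), hM _ (a n).2]

lemma zetaSet_eq_range_union_compl_iff :
    zetaSet X = range stoneCechUnit ∪ (upsilonSet X)ᶜ ↔
      upsilonSet X \ range stoneCechUnit ⊆ interior (upsilonSet X) := by
  rw [zetaSet, closure_compl, Set.ext_iff, subset_def]
  refine forall_congr' fun p => ?_
  have := @interior_subset _ _ (upsilonSet X) p
  simp only [mem_union, mem_compl_iff, mem_sdiff]
  tauto

lemma exists_mem_subset_cozeroSet_isPseudocompactSet_closure [CompletelyRegularSpace X]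
    (h : upsilonSet X \ range stoneCechUnit ⊆ interior (upsilonSet X)) {F : Set (Set X)}
    (hF : IsZUltrafilter F) (hfree : ⋂₀ F = ∅) (hcip : HasCIP F) :
    ∃ Z ∈ F, ∃ C : Set X, IsCozeroSet C ∧ IsPseudocompactSet (closure C) ∧ Z ⊆ C := by
  obtain ⟨p, rfl⟩ := hF.exists_eq_zFilterAt
  have hp := h ⟨hasCIP_zFilterAt_iff.1 hcip, sInter_zFilterAt_eq_empty_iff.1 hfree⟩
  obtain ⟨Z, hZ, C, hC, hZC, hCυ⟩ :=
    exists_mem_zFilterAt_subset_cozeroSet isOpen_interior.isClosed_compl (not_not_intro hp)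
  refine ⟨Z, hZ, C, hC, hC.isOpen.isPseudocompactSet_closure_iff.2 fun q hq => ?_, hZC⟩
  exact interior_subset (by_contra fun hq' => disjoint_left.1 hCυ hq hq')

lemma diff_range_subset_interior_upsilonSet
    (h : ∀ F : Set (Set X), IsZUltrafilter F → ⋂₀ F = ∅ → HasCIP F →
      ∃ Z ∈ F, ∃ C : Set X, IsCozeroSet C ∧ IsPseudocompactSet (closure C) ∧ Z ⊆ C) :
    upsilonSet X \ range stoneCechUnit ⊆ interior (upsilonSet X) := by
  rintro p ⟨hpυ, hpX⟩
  obtain ⟨Z, hZ, C, hC, hCpc, hZC⟩ := h _ (isZUltrafilter_zFilterAt p)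
    (sInter_zFilterAt_eq_empty_iff.2 hpX) (hasCIP_zFilterAt_iff.2 hpυ)
  have hp : p ∉ closure (stoneCechUnit '' Cᶜ) := disjoint_left.1
    (hZ.1.disjoint_closure_image_stoneCechUnit hC (disjoint_compl_right_iff_subset.2 hZC)) hZ.2
  have hU : IsOpen (closure (stoneCechUnit '' Cᶜ))ᶜ := isClosed_closure.isOpen_compl
  refine mem_interior.2 ⟨_, ?_, hU, hp⟩
  calc (closure (stoneCechUnit '' Cᶜ))ᶜ
      ⊆ closure (stoneCechUnit '' (stoneCechUnit ⁻¹' (closure (stoneCechUnit '' Cᶜ))ᶜ)) :=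
        denseRange_stoneCechUnit.subset_closure_image_preimage_of_isOpen hU
    _ ⊆ closure (stoneCechUnit '' closure C) := closure_mono <| image_mono fun x hx =>
        subset_closure (not_not.1 fun hxC => hx (subset_closure ⟨x, hxC, rfl⟩))
    _ ⊆ upsilonSet X := hCpc.closure_image_subset_upsilonSet

end

theorem zetaSet_eq_alphaSet_tfae_general (X : Type*) [TopologicalSpace X]
    [CompletelyRegularSpace X] :
    (zetaSet X = Set.range (stoneCechUnit : X → StoneCech X) ∪ (upsilonSet X)ᶜ ↔
        upsilonSet X \ Set.range (stoneCechUnit : X → StoneCech X) ⊆ interior (upsilonSet X)) ∧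
    (upsilonSet X \ Set.range (stoneCechUnit : X → StoneCech X) ⊆ interior (upsilonSet X) ↔
        ∀ F : Set (Set X), IsZUltrafilter F → ⋂₀ F = ∅ → HasCIP F →
          ∃ Z ∈ F, ∃ C : Set X, IsCozeroSet C ∧ IsPseudocompactSet (closure C) ∧ Z ⊆ C) :=
  ⟨zetaSet_eq_range_union_compl_iff, fun h _ hF hfree hcip =>
    exists_mem_subset_cozeroSet_isPseudocompactSet_closure h hF hfree hcip,
    diff_range_subset_interior_upsilonSet⟩

/-- The following are equivalent for a Tychonoff space `X`:
(a) `ζX = αX`, where `αX = X ∪ (βX \ υX)`;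
(b) `υX \ X ⊆ int_{βX} υX`;
(c) every free z-ultrafilter in `X` with the countable intersection property has an element
contained in a cozero-set of `X` with pseudocompact closure. -/
theorem zetaSet_eq_alphaSet_tfae (X : Type*) [TopologicalSpace X] [T2Space X]
    [CompletelyRegularSpace X] :
    (zetaSet X = Set.range (stoneCechUnit : X → StoneCech X) ∪ (upsilonSet X)ᶜ ↔
        upsilonSet X \ Set.range (stoneCechUnit : X → StoneCech X) ⊆ interior (upsilonSet X)) ∧
    (upsilonSet X \ Set.range (stoneCechUnit : X → StoneCech X) ⊆ interior (upsilonSet X) ↔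
        ∀ F : Set (Set X), IsZUltrafilter F → ⋂₀ F = ∅ → HasCIP F →
          ∃ Z ∈ F, ∃ C : Set X, IsCozeroSet C ∧ IsPseudocompactSet (closure C) ∧ Z ⊆ C) :=
  zetaSet_eq_alphaSet_tfae_general X
end
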